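/- Let α_1, ..., α_μ be positive irrational numbers, β an integer, and δ ∈ (0, 1/2) with δμ < 1/2. Suppose D = β + ∑_{j=1}^μ α_j > 0. Then there exist infinitely many pairs (N, m) ∈ ℕ² such that m·β + ∑_{j=1}^μ ⌈m·α_j⌉ = N + Δ where Δ = #{j : 0 < {m·α_j} < δ}, and min({m·α_j}, 1 - {m·α_j}) < δ for all j. -/

import Mathlib

/-!
By compactness of the torus `(ℝ/ℤ)^μ`, the multiples `m • (α_1, …, α_μ)` come arbitrarily close to
`0` for arbitrarily large `m`; at such `m` every `m α_j` lies within `δ` of an integer. Since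
`m β + ∑ ⌈m α_j⌉ ≥ m D` and `D > 0`, for large `m` this index sum exceeds `μ ≥ Δ`, so
`N := m β + ∑ ⌈m α_j⌉ - Δ` is a natural number.
-/

open Filter Topology Finset

/-- A convergent subsequence of `n • x` is Cauchy, and the difference of two of its far-apart
terms is a large multiple of `x` close to `0`. -/
theorem frequently_norm_nsmul_lt {G : Type*} [SeminormedAddCommGroup G] [CompactSpace G]
    (x : G) {ε : ℝ} (hε : 0 < ε) : ∃ᶠ n : ℕ in atTop, ‖n • x‖ < ε := by
  obtain ⟨y, -, φ, hφ, hlim⟩ :=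
    isCompact_univ.tendsto_subseq (x := fun n : ℕ ↦ n • x) fun _ ↦ Set.mem_univ _
  obtain ⟨K, hK⟩ := Metric.cauchySeq_iff'.mp hlim.cauchySeq ε hε
  refine frequently_atTop.mpr fun N ↦ ⟨φ (N + K) - φ K, ?_, ?_⟩
  · have := hφ.add_le_nat N K
    omega
  · rw [sub_nsmul _ (hφ.monotone (by omega)), ← sub_eq_add_neg, ← dist_eq_norm]
    exact hK _ (by omega)

theorem exists_nat_mul_add_sum_ceil_eq_add_card {ι : Type*} [Fintype ι] (α : ι → ℝ) (β : ℤ)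
    (m : ℕ) (s : Finset ι) (h : (Fintype.card ι : ℝ) < m * (β + ∑ j, α j)) :
    ∃ N : ℕ, (m : ℤ) * β + ∑ j, ⌈(m : ℝ) * α j⌉ = N + #s := by
  have hsum : (m : ℝ) * (β + ∑ j, α j) ≤ ((m * β + ∑ j, ⌈(m : ℝ) * α j⌉ : ℤ) : ℝ) := by
    push_cast
    rw [mul_add, mul_sum]
    gcongr with j
    exact Int.le_ceil _
  have hcard : (#s : ℤ) ≤ m * β + ∑ j, ⌈(m : ℝ) * α j⌉ := by
    exact_mod_cast (Nat.cast_le.mpr s.card_le_univ).trans (h.trans_le hsum).le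
  exact ⟨(m * β + ∑ j, ⌈(m : ℝ) * α j⌉ - #s).toNat, by omega⟩

open Classical in
theorem stmt_18_general (μ : ℕ) (α : Fin μ → ℝ) (β : ℤ)
    (δ : ℝ) (hδ : 0 < δ)
    (hD : 0 < (β : ℝ) + ∑ j, α j) :
    {p : ℕ × ℕ |
      ((p.2 : ℤ) * β + ∑ j, ⌈(p.2 : ℝ) * α j⌉ = (p.1 : ℤ) +
        (Finset.univ.filter (fun j : Fin μ =>
          0 < Int.fract ((p.2 : ℝ) * α j) ∧ Int.fract ((p.2 : ℝ) * α j) < δ)).card) ∧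
      ∀ j, min (Int.fract ((p.2 : ℝ) * α j)) (1 - Int.fract ((p.2 : ℝ) * α j)) < δ
    }.Infinite := by
  have hnear : ∃ᶠ m : ℕ in atTop,
      ∀ j, min (Int.fract ((m : ℝ) * α j)) (1 - Int.fract ((m : ℝ) * α j)) < δ := by
    refine (frequently_norm_nsmul_lt (fun j ↦ (α j : UnitAddCircle)) hδ).mono fun m hm j ↦ ?_
    have hj : ‖((m * α j : ℝ) : UnitAddCircle)‖ < δ := by
      simpa [← nsmul_eq_mul] using
        (norm_le_pi_norm (m • fun j ↦ (α j : UnitAddCircle)) j).trans_lt hm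
    rwa [UnitAddCircle.norm_eq, abs_sub_round_eq_min] at hj
  have hlarge : ∀ᶠ m : ℕ in atTop, (μ : ℝ) < m * (β + ∑ j, α j) :=
    (tendsto_natCast_atTop_atTop.atTop_mul_const hD).eventually_gt_atTop _
  refine Set.Infinite.of_image Prod.snd <| (Nat.frequently_atTop_iff_infinite.mp
    (hnear.and_eventually hlarge)).mono fun m hm ↦ ?_
  obtain ⟨hm_near, hm_large⟩ := hm
  obtain ⟨N, hN⟩ := exists_nat_mul_add_sum_ceil_eq_add_card α β m
    (univ.filter fun j ↦ 0 < Int.fract ((m : ℝ) * α j) ∧ Int.fract ((m : ℝ) * α j) < δ)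
    (by simpa using hm_large)
  exact ⟨(N, m), ⟨hN, hm_near⟩, rfl⟩

open Classical in
theorem stmt_18 (μ : ℕ) (α : Fin μ → ℝ) (β : ℤ)
    (hαpos : ∀ j, 0 < α j) (hαirr : ∀ j, Irrational (α j))
    (δ : ℝ) (hδ : 0 < δ) (hδ2 : δ < 1 / 2) (hδμ : δ * μ < 1 / 2)
    (hD : 0 < (β : ℝ) + ∑ j, α j) :
    {p : ℕ × ℕ |
      ((p.2 : ℤ) * β + ∑ j, ⌈(p.2 : ℝ) * α j⌉ = (p.1 : ℤ) +
        (Finset.univ.filter (fun j : Fin μ =>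
          0 < Int.fract ((p.2 : ℝ) * α j) ∧ Int.fract ((p.2 : ℝ) * α j) < δ)).card) ∧
      ∀ j, min (Int.fract ((p.2 : ℝ) * α j)) (1 - Int.fract ((p.2 : ℝ) * α j)) < δ
    }.Infinite :=
  stmt_18_general μ α β δ hδ hD
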